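/- Let n ≥ 4. In the quasi-abelian group QA_n, both tuples T = (yx; y, y, x^{2^{n-2}-2}) and T' = (x; y, x^{2^{n-2}}, y x^{2^{n-2}-2}) satisfy all of the following: the first entry lies in QA_n \ H_1; the remaining three entries lie in H_1 and have orders 2, 2 and 2^{n-2} respectively; writing the tuple as (d; β_1, β_2, β_3), the relation β_1 β_2 β_3 d^2 = 1 holds; and the four entries generate QA_n. Nevertheless, for every automorphism φ of QA_n, the multiset of conjugacy classes of (φ(y), φ(y), φ(x^{2^{n-2}-2})) is different from the multiset of conjugacy classes of (y, x^{2^{n-2}}, y x^{2^{n-2}-2}); in particular the two tuples are not equivalent under Aut(QA_n) combined with conjugation and permutation of the last three entries. -/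

import Mathlib

/-- The relators of the quasi-abelian group `QA_n`:
`x^(2^(n-1)) = 1`, `y^2 = 1`, `y * x * y⁻¹ = x^(2^(n-2)+1)`.
The generator `x` is encoded by `true` and `y` by `false`. -/
def qaRels (n : ℕ) : Set (FreeGroup Bool) :=
  {FreeGroup.of true ^ 2 ^ (n - 1),
   FreeGroup.of false ^ 2,
   FreeGroup.of false * FreeGroup.of true * (FreeGroup.of false)⁻¹ *
     (FreeGroup.of true ^ (2 ^ (n - 2) + 1))⁻¹}

/-- The quasi-abelian group `QA_n`, given by the presentation
`⟨x, y ∣ x^(2^(n-1)) = y^2 = 1, y x y⁻¹ = x^(2^(n-2)+1)⟩`. -/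
abbrev QA (n : ℕ) : Type := PresentedGroup (qaRels n)

/-- The generator `x` of `QA_n`. -/
def qx (n : ℕ) : QA n := PresentedGroup.of true

/-- The generator `y` of `QA_n`. -/
def qy (n : ℕ) : QA n := PresentedGroup.of false

/-- The index-two subgroup `H₁ = ⟨x², y⟩` of `QA_n`. -/
def H1 (n : ℕ) : Subgroup (QA n) := Subgroup.closure {qx n ^ 2, qy n}


/-!
Everything is read off from homomorphisms out of the presentation. Letting `x` act on
`ZMod 2^(n-1)` by translation by `1` and `y` by multiplication with the involutive unit
`2^(n-2) + 1` shows that `x` has order exactly `2^(n-1)`; since `y x^j y = x^((2^(n-2)+1) j)`,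
every order and relation needed is then a statement about exponents of `x` modulo `2^(n-1)`.
The parity of the exponent of `x` is a homomorphism to `ZMod 2` that kills `H₁`.
In the abelian quotient `x ↦ (1, 0)`, `y ↦ (0, 1)` of `ZMod 4 × ZMod 2` the elements
`y`, `x^(2^(n-2))` and `y x^(2^(n-2)-2)` go to `(0, 1)`, `(0, 0)` and `(2, 1)`, so their conjugacy
classes are distinct, whereas the multiset attached to `T` repeats the class of `φ y`.
-/

theorem four_dvd_two_pow {k : ℕ} (hk : 2 ≤ k) : 4 ∣ 2 ^ k := pow_dvd_pow 2 hk

theorem orderOf_pow_two_pow_mul_odd {G : Type*} [Monoid G] {g : G} {a b c : ℕ}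
    (hg : orderOf g = 2 ^ (a + b)) (hc : Odd c) : orderOf (g ^ (2 ^ a * c)) = 2 ^ b := by
  have h : orderOf (g ^ 2 ^ a) = 2 ^ b := by
    rw [orderOf_pow_of_dvd (by positivity) (hg ▸ pow_dvd_pow 2 (Nat.le_add_right a b)), hg,
      pow_add, Nat.mul_div_cancel_left _ (by positivity)]
  have hcop : (orderOf (g ^ 2 ^ a)).Coprime c := h ▸ (Nat.coprime_two_left.2 hc).pow_left b
  rw [pow_mul, hcop.orderOf_pow, h]

theorem orderOf_eq_two_pow_succ_of_orderOf_sq {G : Type*} [Monoid G] {g : G} {b : ℕ}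
    (hb : b ≠ 0) (h : orderOf (g ^ 2) = 2 ^ b) : orderOf g = 2 ^ (b + 1) := by
  apply orderOf_eq_prime_pow
  · obtain ⟨c, rfl⟩ := Nat.exists_eq_succ_of_ne_zero hb
    rw [pow_succ', pow_mul]
    exact pow_ne_one_of_lt_orderOf (by positivity) (h ▸ Nat.pow_lt_pow_succ one_lt_two)
  · rw [pow_succ', pow_mul, ← h, pow_orderOf_eq_one]

theorem ConjClasses.mk_ne_mk_of_map_ne {G H : Type*} [Monoid G] [CommMonoid H] (f : G →* H)
    {g g' : G} (h : f g ≠ f g') : ConjClasses.mk g ≠ ConjClasses.mk g' := fun hc =>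
  h (isConj_iff_eq.mp (f.map_isConj (ConjClasses.mk_eq_mk_iff_isConj.mp hc)))

theorem Multiset.cons_cons_self_ne_of_nodup {α : Type*} {a : α} {s t : Multiset α}
    (ht : t.Nodup) : a ::ₘ a ::ₘ s ≠ t := by
  rintro rfl
  simp at ht

namespace QA

variable {n : ℕ}

theorem qx_pow_two_pow : qx n ^ 2 ^ (n - 1) = 1 := by
  simpa [qx, PresentedGroup.of] using
    PresentedGroup.one_of_mem (rels := qaRels n) (Set.mem_insert _ _)

theorem qy_sq : qy n ^ 2 = 1 := by
  simpa [qy, PresentedGroup.of] using PresentedGroup.one_of_mem (rels := qaRels n)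
    (Set.mem_insert_of_mem _ (Set.mem_insert _ _))

theorem qy_mul_qx_mul_qy_inv : qy n * qx n * (qy n)⁻¹ = qx n ^ (2 ^ (n - 2) + 1) := by
  simpa [qx, qy, PresentedGroup.of, mul_inv_eq_one] using
    PresentedGroup.one_of_mem (rels := qaRels n)
      (Set.mem_insert_of_mem _ (Set.mem_insert_of_mem _ rfl))

section lift

variable {G : Type*} [Group G] (a b : G)

def lift (ha : a ^ 2 ^ (n - 1) = 1) (hb : b ^ 2 = 1)
    (hab : b * a * b⁻¹ = a ^ (2 ^ (n - 2) + 1)) : QA n →* G :=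
  PresentedGroup.toGroup (f := fun i => cond i a b) <| by
    rintro r (rfl | rfl | rfl)
    · simpa using ha
    · simpa using hb
    · simp [hab]

variable {a b} {ha : a ^ 2 ^ (n - 1) = 1} {hb : b ^ 2 = 1}
  {hab : b * a * b⁻¹ = a ^ (2 ^ (n - 2) + 1)}

@[simp] theorem lift_qx : lift a b ha hb hab (qx n) = a := PresentedGroup.toGroup.of _

@[simp] theorem lift_qy : lift a b ha hb hab (qy n) = b := PresentedGroup.toGroup.of _

end lift

theorem orderOf_qx (hn : 3 ≤ n) : orderOf (qx n) = 2 ^ (n - 1) := by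
  obtain ⟨m, rfl⟩ := Nat.exists_eq_add_of_le' hn
  rw [show m + 3 - 1 = m + 2 by omega]
  have hN : (2 : ZMod (2 ^ (m + 2))) ^ (m + 2) = 0 := by exact_mod_cast ZMod.natCast_self _
  have hr : ((2 : ZMod (2 ^ (m + 2))) ^ (m + 1) + 1) * (2 ^ (m + 1) + 1) = 1 := by
    linear_combination (2 ^ m + 1 : ZMod (2 ^ (m + 2))) * hN
  let u : (ZMod (2 ^ (m + 2)))ˣ := ⟨_, _, hr, hr⟩
  let f := lift (n := m + 3) (Equiv.addRight (1 : ZMod (2 ^ (m + 2)))) (MulAction.toPerm u)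
    (by simp [Equiv.nsmul_addRight])
    (by ext x; simp [sq, u, Units.smul_def, ← mul_assoc, hr])
    (by ext x; simp [Equiv.nsmul_addRight, u, Units.smul_def, ← mul_assoc, hr, add_assoc])
  refine Nat.dvd_antisymm (orderOf_dvd_of_pow_eq_one qx_pow_two_pow) ?_
  have h := congr(f $(pow_orderOf_eq_one (qx (m + 3))) 0)
  simp only [f, map_pow, lift_qx, map_one, Equiv.nsmul_addRight, Equiv.Perm.one_apply,
    Equiv.coe_addRight, zero_add, nsmul_one] at h
  exact (ZMod.natCast_eq_zero_iff _ _).1 h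

theorem qx_pow_eq_one_iff (hn : 3 ≤ n) {j : ℕ} : qx n ^ j = 1 ↔ 2 ^ (n - 1) ∣ j := by
  rw [← orderOf_qx hn, orderOf_dvd_iff_pow_eq_one]

theorem qy_inv : (qy n)⁻¹ = qy n := inv_eq_of_mul_eq_one_right (by rw [← sq, qy_sq])

theorem qy_mul_qx_pow_mul_qy (j : ℕ) :
    qy n * qx n ^ j * qy n = qx n ^ ((2 ^ (n - 2) + 1) * j) := by
  calc qy n * qx n ^ j * qy n = (qy n * qx n * (qy n)⁻¹) ^ j := by rw [conj_pow, qy_inv]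
    _ = _ := by rw [qy_mul_qx_mul_qy_inv, pow_mul]

theorem sq_qy_mul_qx_pow (j : ℕ) : (qy n * qx n ^ j) ^ 2 = qx n ^ ((2 ^ (n - 2) + 2) * j) := by
  rw [sq, ← mul_assoc, qy_mul_qx_pow_mul_qy, ← pow_add]
  ring_nf

theorem closure_eq_top_of_qx_mem_of_qy_mem {S : Set (QA n)} (hx : qx n ∈ Subgroup.closure S)
    (hy : qy n ∈ Subgroup.closure S) : Subgroup.closure S = ⊤ := by
  rw [eq_top_iff, ← PresentedGroup.closure_range_of, Subgroup.closure_le]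
  rintro _ ⟨_ | _, rfl⟩
  exacts [hy, hx]

theorem ofAdd_one_zero_pow (e : ℕ) :
    Multiplicative.ofAdd ((1, 0) : ZMod 4 × ZMod 2) ^ e = .ofAdd (((e % 4 : ℕ) : ZMod 4), 0) := by
  rw [ZMod.natCast_mod, ← ofAdd_nsmul, Prod.smul_mk, nsmul_eq_mul, mul_one, smul_zero]

def toZMod4Prod (hn : 4 ≤ n) : QA n →* Multiplicative (ZMod 4 × ZMod 2) :=
  lift (.ofAdd (1, 0)) (.ofAdd (0, 1))
    (by rw [ofAdd_one_zero_pow, Nat.mod_eq_zero_of_dvd (four_dvd_two_pow (by omega))]; rfl)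
    (by decide)
    (by
      have := four_dvd_two_pow (k := n - 2) (by omega)
      rw [mul_inv_cancel_comm, ofAdd_one_zero_pow, show (2 ^ (n - 2) + 1) % 4 = 1 by omega]
      rfl)

theorem qy_ne_one (hn : 4 ≤ n) : qy n ≠ 1 := fun h => by
  simpa [toZMod4Prod] using congr(toZMod4Prod hn $h)

theorem orderOf_qy (hn : 4 ≤ n) : orderOf (qy n) = 2 := orderOf_eq_prime qy_sq (qy_ne_one hn)

theorem nodup_conjClasses_tupleT' (hn : 4 ≤ n) :
    ({ConjClasses.mk (qy n), ConjClasses.mk (qx n ^ 2 ^ (n - 2)),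
      ConjClasses.mk (qy n * qx n ^ (2 ^ (n - 2) - 2))} : Multiset (ConjClasses (QA n))).Nodup := by
  have h4 := four_dvd_two_pow (k := n - 2) (by omega)
  have hy : toZMod4Prod hn (qy n) = .ofAdd (0, 1) := lift_qy
  have hx : toZMod4Prod hn (qx n ^ 2 ^ (n - 2)) = 1 := by
    rw [map_pow, toZMod4Prod, lift_qx, ofAdd_one_zero_pow, Nat.mod_eq_zero_of_dvd h4]
    rfl
  have hyx : toZMod4Prod hn (qy n * qx n ^ (2 ^ (n - 2) - 2)) = .ofAdd (2, 1) := by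
    have : 4 ≤ 2 ^ (n - 2) := Nat.le_of_dvd (by positivity) h4
    rw [map_mul, map_pow, toZMod4Prod, lift_qx, lift_qy, ofAdd_one_zero_pow,
      show (2 ^ (n - 2) - 2) % 4 = 2 by omega]
    rfl
  simp only [Multiset.insert_eq_cons, Multiset.nodup_cons, Multiset.mem_cons,
    Multiset.mem_singleton, not_or, Multiset.nodup_singleton, and_true]
  refine ⟨⟨?_, ?_⟩, ?_⟩ <;> apply ConjClasses.mk_ne_mk_of_map_ne (toZMod4Prod hn) <;>
    simp only [hx, hy, hyx] <;> decide

def toZMod2 (hn : 3 ≤ n) : QA n →* Multiplicative (ZMod 2) :=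
  lift (.ofAdd 1) 1
    (by simp [← ofAdd_nsmul, show (2 : ZMod 2) = 0 from rfl, show n - 1 ≠ 0 by omega])
    (one_pow 2)
    (by simp [← ofAdd_nsmul, show (2 : ZMod 2) = 0 from rfl, show n - 2 ≠ 0 by omega])

theorem H1_le_ker_toZMod2 (hn : 3 ≤ n) : H1 n ≤ (toZMod2 hn).ker := by
  rw [H1, Subgroup.closure_le]
  rintro _ (rfl | rfl)
  · show toZMod2 hn (qx n ^ 2) = 1
    rw [map_pow, toZMod2, lift_qx]
    rfl
  · exact lift_qy

theorem qx_notMem_H1 (hn : 3 ≤ n) : qx n ∉ H1 n := fun h => by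
  simpa [toZMod2] using H1_le_ker_toZMod2 hn h

theorem qy_mul_qx_notMem_H1 (hn : 3 ≤ n) : qy n * qx n ∉ H1 n := fun h => by
  simpa [toZMod2] using H1_le_ker_toZMod2 hn h

theorem qy_mem_H1 : qy n ∈ H1 n := Subgroup.subset_closure (by simp)

theorem qx_pow_mem_H1 {j : ℕ} (hj : Even j) : qx n ^ j ∈ H1 n := by
  obtain ⟨i, rfl⟩ := hj
  rw [← two_mul, pow_mul]
  exact pow_mem (Subgroup.subset_closure (by simp)) i

theorem orderOf_qx_pow_two_pow (hn : 3 ≤ n) : orderOf (qx n ^ 2 ^ (n - 2)) = 2 := by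
  simpa using orderOf_pow_two_pow_mul_odd (a := n - 2) (b := 1)
    (by rw [orderOf_qx hn]; congr 1; omega) odd_one

theorem orderOf_qx_pow_two_pow_sub_two (hn : 4 ≤ n) :
    orderOf (qx n ^ (2 ^ (n - 2) - 2)) = 2 ^ (n - 2) := by
  have h : 2 ^ (n - 2) - 2 = 2 ^ 1 * (2 ^ (n - 3) - 1) := by
    rw [show n - 2 = n - 3 + 1 by omega, pow_succ]
    omega
  rw [h]
  exact orderOf_pow_two_pow_mul_odd (by rw [orderOf_qx (by omega)]; congr 1; omega)
    (mersenne_odd.2 (by omega))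

theorem orderOf_qy_mul_qx_pow_two_pow_sub_two (hn : 4 ≤ n) :
    orderOf (qy n * qx n ^ (2 ^ (n - 2) - 2)) = 2 ^ (n - 2) := by
  have h : (2 ^ (n - 2) + 2) * (2 ^ (n - 2) - 2) = 2 ^ 2 * (2 ^ (2 * n - 6) - 1) := by
    obtain ⟨m, rfl⟩ := Nat.exists_eq_add_of_le' hn
    have hA := Nat.one_le_two_pow (n := m)
    rw [show m + 4 - 2 = m + 2 by omega, show 2 * (m + 4) - 6 = m + m + 2 by omega, pow_add,
      pow_add, pow_add]
    zify [show 2 ≤ 2 ^ m * 2 ^ 2 by omega, show 1 ≤ 2 ^ m * 2 ^ m * 2 ^ 2 by nlinarith]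
    ring
  have hsq : orderOf ((qy n * qx n ^ (2 ^ (n - 2) - 2)) ^ 2) = 2 ^ (n - 3) := by
    rw [sq_qy_mul_qx_pow, h]
    exact orderOf_pow_two_pow_mul_odd (by rw [orderOf_qx (by omega)]; congr 1; omega)
      (mersenne_odd.2 (by omega))
  rw [orderOf_eq_two_pow_succ_of_orderOf_sq (by omega) hsq]
  congr 1
  omega

theorem tupleT_relation (hn : 4 ≤ n) :
    qy n * qy n * qx n ^ (2 ^ (n - 2) - 2) * (qy n * qx n) ^ 2 = 1 := by
  have h := sq_qy_mul_qx_pow (n := n) 1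
  rw [pow_one, mul_one] at h
  rw [← sq, qy_sq, one_mul, h, ← pow_add, ← qx_pow_two_pow (n := n)]
  congr 1
  have : 2 ≤ 2 ^ (n - 2) := Nat.le_self_pow (by omega) 2
  rw [show n - 1 = n - 2 + 1 by omega, pow_succ]
  omega

theorem tupleT'_relation (hn : 4 ≤ n) :
    qy n * qx n ^ 2 ^ (n - 2) * (qy n * qx n ^ (2 ^ (n - 2) - 2)) * qx n ^ 2 = 1 := by
  rw [← mul_assoc (qy n * _), qy_mul_qx_pow_mul_qy, ← pow_add, ← pow_add,
    qx_pow_eq_one_iff (by omega)]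
  obtain ⟨m, rfl⟩ := Nat.exists_eq_add_of_le' hn
  refine ⟨2 ^ (m + 1) + 1, ?_⟩
  have hA := Nat.one_le_two_pow (n := m)
  rw [show m + 4 - 2 = m + 2 by omega, show m + 4 - 1 = m + 3 by omega, pow_succ, pow_succ,
    pow_succ]
  zify [show 2 ≤ 2 ^ m * 2 * 2 by omega]
  ring

theorem closure_tupleT_eq_top :
    Subgroup.closure {qy n * qx n, qy n, qx n ^ (2 ^ (n - 2) - 2)} = ⊤ := by
  have hyx : qy n * qx n ∈ Subgroup.closure {qy n * qx n, qy n, qx n ^ (2 ^ (n - 2) - 2)} :=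
    Subgroup.subset_closure (by simp)
  have hy : qy n ∈ Subgroup.closure {qy n * qx n, qy n, qx n ^ (2 ^ (n - 2) - 2)} :=
    Subgroup.subset_closure (by simp)
  exact closure_eq_top_of_qx_mem_of_qy_mem (by simpa using mul_mem (inv_mem hy) hyx) hy

theorem closure_tupleT'_eq_top :
    Subgroup.closure {qx n, qy n, qx n ^ 2 ^ (n - 2), qy n * qx n ^ (2 ^ (n - 2) - 2)} = ⊤ :=
  closure_eq_top_of_qx_mem_of_qy_mem (Subgroup.subset_closure (by simp))
    (Subgroup.subset_closure (by simp))

end QA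

/-- For `n ≥ 4`, both tuples `T = (yx; y, y, x^(2^(n-2)-2))` and
`T' = (x; y, x^(2^(n-2)), y x^(2^(n-2)-2))` of elements of `QA_n` satisfy: the first
entry lies outside `H₁`; the remaining three lie in `H₁` and have orders `2`, `2`,
`2^(n-2)`; writing the tuple as `(d; β₁, β₂, β₃)` the relation `β₁ β₂ β₃ d² = 1` holds;
and the four entries generate `QA_n`. Nevertheless, for every automorphism `φ` of
`QA_n`, the multiset of conjugacy classes of `(φ y, φ y, φ (x^(2^(n-2)-2)))` differs
from the multiset of conjugacy classes of `(y, x^(2^(n-2)), y x^(2^(n-2)-2))`. -/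
theorem stmt15 (n : ℕ) (hn : 4 ≤ n) :
    (qy n * qx n ∉ H1 n ∧
      (qy n ∈ H1 n ∧ qx n ^ (2 ^ (n - 2) - 2) ∈ H1 n) ∧
      orderOf (qy n) = 2 ∧ orderOf (qx n ^ (2 ^ (n - 2) - 2)) = 2 ^ (n - 2) ∧
      qy n * qy n * qx n ^ (2 ^ (n - 2) - 2) * (qy n * qx n) ^ 2 = 1 ∧
      Subgroup.closure {qy n * qx n, qy n, qx n ^ (2 ^ (n - 2) - 2)} =
        (⊤ : Subgroup (QA n))) ∧
    (qx n ∉ H1 n ∧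
      (qy n ∈ H1 n ∧ qx n ^ 2 ^ (n - 2) ∈ H1 n ∧
        qy n * qx n ^ (2 ^ (n - 2) - 2) ∈ H1 n) ∧
      orderOf (qy n) = 2 ∧ orderOf (qx n ^ 2 ^ (n - 2)) = 2 ∧
      orderOf (qy n * qx n ^ (2 ^ (n - 2) - 2)) = 2 ^ (n - 2) ∧
      qy n * qx n ^ 2 ^ (n - 2) * (qy n * qx n ^ (2 ^ (n - 2) - 2)) * (qx n) ^ 2 = 1 ∧
      Subgroup.closure {qx n, qy n, qx n ^ 2 ^ (n - 2),
        qy n * qx n ^ (2 ^ (n - 2) - 2)} = (⊤ : Subgroup (QA n))) ∧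
    (∀ φ : MulAut (QA n),
      ({ConjClasses.mk (φ (qy n)), ConjClasses.mk (φ (qy n)),
          ConjClasses.mk (φ (qx n ^ (2 ^ (n - 2) - 2)))} : Multiset (ConjClasses (QA n))) ≠
        {ConjClasses.mk (qy n), ConjClasses.mk (qx n ^ 2 ^ (n - 2)),
          ConjClasses.mk (qy n * qx n ^ (2 ^ (n - 2) - 2))}) := by
  have h3 : 3 ≤ n := by omega
  have hR : Even (2 ^ (n - 2)) := Nat.even_pow.2 ⟨even_two, by omega⟩
  have hk : Even (2 ^ (n - 2) - 2) := hR.tsub even_two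
  open QA in
  exact ⟨⟨qy_mul_qx_notMem_H1 h3, ⟨qy_mem_H1, qx_pow_mem_H1 hk⟩, orderOf_qy hn,
      orderOf_qx_pow_two_pow_sub_two hn, tupleT_relation hn, closure_tupleT_eq_top⟩,
    ⟨qx_notMem_H1 h3, ⟨qy_mem_H1, qx_pow_mem_H1 hR, mul_mem qy_mem_H1 (qx_pow_mem_H1 hk)⟩,
      orderOf_qy hn, orderOf_qx_pow_two_pow h3, orderOf_qy_mul_qx_pow_two_pow_sub_two hn,
      tupleT'_relation hn, closure_tupleT'_eq_top⟩,
    fun _ => Multiset.cons_cons_self_ne_of_nodup (nodup_conjClasses_tupleT' hn)⟩
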